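/- Let q ∈ [0,1] be a constant and let G(x) = 3x − x³ − 3 + 6q. Then: (1) if q < 1/6, G has a unique real zero x*, this zero satisfies x* < −1, and G(x) > 0 for x < x* while G(x) < 0 for x > x* (so x* is a globally asymptotically stable equilibrium of ẋ = γ·G(x) for any γ > 0); (2) if 1/6 < q < 5/6, G has exactly three real zeros x* < x° < x**, with x* < −1, −1 < x° < 1, and x** > 1, and G > 0 on (−∞, x*), G < 0 on (x*, x°), G > 0 on (x°, x**), and G < 0 on (x**, ∞) (so x* and x** are locally stable equilibria and x° is unstable); (3) if q > 5/6, G has a unique real zero x**, this zero satisfies x** > 1, and G(x) > 0 for x < x** while G(x) < 0 for x > x**. -/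

import Mathlib

open Set

/-!
Write `G = cubic (6q - 3)` with `cubic c x = 3x - x³ + c`. If `r` is a root, then
`cubic c x = (r - x)(x² + xr + r² - 3)`, and the quadratic factor is positive as soon as `r² > 4`;
so a root outside `[-2, 2]` is the only one and `G` changes sign from `+` to `-` there. For
`|c| > 2` such a root exists by the intermediate value theorem, since `cubic c (∓2) = c ± 2`.
For `|c| < 2` the values at `-2, -1, 1, 2` alternate in sign, giving three roots, and then
`cubic c x = (a - x)(b - x)(d - x)` displays the sign pattern.
-/

def cubic (c x : ℝ) : ℝ := 3 * x - x ^ 3 + c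

lemma continuous_cubic (c : ℝ) : Continuous (cubic c) := by
  unfold cubic; fun_prop

lemma cubic_eq_mul_of_root {c r : ℝ} (hr : cubic c r = 0) (x : ℝ) :
    cubic c x = (r - x) * (x ^ 2 + x * r + r ^ 2 - 3) := by
  unfold cubic at *; linear_combination hr

lemma cubic_root_unique_of_four_lt_sq {c r : ℝ} (hr : cubic c r = 0) (hr2 : 4 < r ^ 2) :
    (∀ x, cubic c x = 0 → x = r) ∧ (∀ x, x < r → 0 < cubic c x) ∧
      (∀ x, r < x → cubic c x < 0) := by
  have hquad : ∀ x : ℝ, 0 < x ^ 2 + x * r + r ^ 2 - 3 := fun x => by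
    nlinarith [sq_nonneg (2 * x + r)]
  have hpos : ∀ x, x < r → 0 < cubic c x := fun x hx => by
    rw [cubic_eq_mul_of_root hr]; exact mul_pos (by linarith) (hquad x)
  have hneg : ∀ x, r < x → cubic c x < 0 := fun x hx => by
    rw [cubic_eq_mul_of_root hr]; exact mul_neg_of_neg_of_pos (by linarith) (hquad x)
  refine ⟨fun x hx => ?_, hpos, hneg⟩
  rcases lt_trichotomy x r with h | h | h
  · exact absurd hx (hpos x h).ne'
  · exact h
  · exact absurd hx (hneg x h).ne

lemma cubic_eq_prod_of_roots {c a b d : ℝ} (hab : a ≠ b) (had : a ≠ d) (hbd : b ≠ d)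
    (ha : cubic c a = 0) (hb : cubic c b = 0) (hd : cubic c d = 0) (x : ℝ) :
    cubic c x = (a - x) * (b - x) * (d - x) := by
  unfold cubic at *
  have hsq_ab : a ^ 2 + a * b + b ^ 2 = 3 := mul_left_cancel₀ (sub_ne_zero.2 hab)
    (by linear_combination hb - ha)
  have hsq_ad : a ^ 2 + a * d + d ^ 2 = 3 := mul_left_cancel₀ (sub_ne_zero.2 had)
    (by linear_combination hd - ha)
  have hsum : a + b + d = 0 := mul_left_cancel₀ (sub_ne_zero.2 hbd)
    (by linear_combination hsq_ab - hsq_ad)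
  linear_combination (a - x) * hsq_ab + ha - (x - a) * (x - b) * hsum

lemma cubic_sign_of_three_roots {c a b d : ℝ} (hab : a < b) (hbd : b < d)
    (ha : cubic c a = 0) (hb : cubic c b = 0) (hd : cubic c d = 0) :
    (∀ x, cubic c x = 0 → x = a ∨ x = b ∨ x = d) ∧
      (∀ x, x < a → 0 < cubic c x) ∧
      (∀ x, a < x → x < b → cubic c x < 0) ∧
      (∀ x, b < x → x < d → 0 < cubic c x) ∧
      (∀ x, d < x → cubic c x < 0) := by
  have hprod := cubic_eq_prod_of_roots hab.ne (hab.trans hbd).ne hbd.ne ha hb hd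
  refine ⟨fun x hx => ?_, fun x hx => ?_, fun x hxa hxb => ?_, fun x hxb hxd => ?_,
    fun x hx => ?_⟩ <;> rw [hprod] at *
  · rcases mul_eq_zero.1 hx with h | h
    · rcases mul_eq_zero.1 h with h | h
      · exact .inl (sub_eq_zero.1 h).symm
      · exact .inr (.inl (sub_eq_zero.1 h).symm)
    · exact .inr (.inr (sub_eq_zero.1 h).symm)
  · exact mul_pos (mul_pos (by linarith) (by linarith)) (by linarith)
  · exact mul_neg_of_neg_of_pos (mul_neg_of_neg_of_pos (by linarith) (by linarith))
      (by linarith)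
  · exact mul_pos (mul_pos_of_neg_of_neg (by linarith) (by linarith)) (by linarith)
  · exact mul_neg_of_pos_of_neg (mul_pos_of_neg_of_neg (by linarith) (by linarith))
      (by linarith)

lemma cubic_neg (c x : ℝ) : cubic c (-x) = -cubic (-c) x := by
  unfold cubic; ring

lemma exists_cubic_root_lt_neg_two {c : ℝ} (hc : c < -2) : ∃ r < -2, cubic c r = 0 := by
  have hleft : 0 < cubic c (c - 2) := by
    have h : cubic c (c - 2) = (2 - c) * ((c - 2) ^ 2 - 4) + 2 := by unfold cubic; ring
    rw [h]; nlinarith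
  obtain ⟨r, hr, hr0⟩ := intermediate_value_Ioo' (by linarith : c - 2 ≤ -2)
    (continuous_cubic c).continuousOn ⟨by unfold cubic; linarith, hleft⟩
  exact ⟨r, hr.2, hr0⟩

lemma exists_cubic_root_two_lt {c : ℝ} (hc : 2 < c) : ∃ r, 2 < r ∧ cubic c r = 0 := by
  obtain ⟨r, hr, hr0⟩ := exists_cubic_root_lt_neg_two (by linarith : -c < -2)
  exact ⟨-r, by linarith, by rw [cubic_neg, hr0, neg_zero]⟩

lemma exists_three_cubic_roots {c : ℝ} (hc₁ : -2 < c) (hc₂ : c < 2) :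
    ∃ a b d, a ∈ Ioo (-2) (-1) ∧ b ∈ Ioo (-1) 1 ∧ d ∈ Ioo 1 2 ∧
      cubic c a = 0 ∧ cubic c b = 0 ∧ cubic c d = 0 := by
  have hcont {s : Set ℝ} : ContinuousOn (cubic c) s := (continuous_cubic c).continuousOn
  have h₁ : 0 < cubic c (-2) := by norm_num [cubic]; linarith
  have h₂ : cubic c (-1) < 0 := by norm_num [cubic]; linarith
  have h₃ : 0 < cubic c 1 := by norm_num [cubic]; linarith
  have h₄ : cubic c 2 < 0 := by norm_num [cubic]; linarith
  obtain ⟨a, ha, ha0⟩ := intermediate_value_Ioo' (by norm_num : (-2 : ℝ) ≤ -1) hcont ⟨h₂, h₁⟩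
  obtain ⟨b, hb, hb0⟩ := intermediate_value_Ioo (by norm_num : (-1 : ℝ) ≤ 1) hcont ⟨h₂, h₃⟩
  obtain ⟨d, hd, hd0⟩ := intermediate_value_Ioo' (by norm_num : (1 : ℝ) ≤ 2) hcont ⟨h₄, h₃⟩
  exact ⟨a, b, d, ha, hb, hd, ha0, hb0, hd0⟩

theorem stmt_0 (q : ℝ)
    (G : ℝ → ℝ) (hG : ∀ x, G x = 3 * x - x ^ 3 - 3 + 6 * q) :
    (q < 1 / 6 →
      ∃ xs : ℝ, xs < -1 ∧ G xs = 0 ∧ (∀ x, G x = 0 → x = xs) ∧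
        (∀ x, x < xs → 0 < G x) ∧ (∀ x, xs < x → G x < 0)) ∧
    (1 / 6 < q → q < 5 / 6 →
      ∃ xs xo xss : ℝ, xs < -1 ∧ -1 < xo ∧ xo < 1 ∧ 1 < xss ∧
        xs < xo ∧ xo < xss ∧
        G xs = 0 ∧ G xo = 0 ∧ G xss = 0 ∧
        (∀ x, G x = 0 → x = xs ∨ x = xo ∨ x = xss) ∧
        (∀ x, x < xs → 0 < G x) ∧
        (∀ x, xs < x → x < xo → G x < 0) ∧
        (∀ x, xo < x → x < xss → 0 < G x) ∧
        (∀ x, xss < x → G x < 0)) ∧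
    (5 / 6 < q →
      ∃ xss : ℝ, 1 < xss ∧ G xss = 0 ∧ (∀ x, G x = 0 → x = xss) ∧
        (∀ x, x < xss → 0 < G x) ∧ (∀ x, xss < x → G x < 0)) := by
  obtain rfl : G = cubic (6 * q - 3) := funext fun x => by rw [hG, cubic]; ring
  refine ⟨fun hq => ?_, fun hq hq' => ?_, fun hq => ?_⟩
  · obtain ⟨r, hr, hr0⟩ := exists_cubic_root_lt_neg_two (by linarith : 6 * q - 3 < -2)
    exact ⟨r, by linarith, hr0, cubic_root_unique_of_four_lt_sq hr0 (by nlinarith)⟩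
  · obtain ⟨a, b, d, ha, hb, hd, ha0, hb0, hd0⟩ :=
      exists_three_cubic_roots (by linarith : -2 < 6 * q - 3) (by linarith)
    have hab : a < b := ha.2.trans hb.1
    have hbd : b < d := hb.2.trans hd.1
    exact ⟨a, b, d, ha.2, hb.1, hb.2, hd.1, hab, hbd, ha0, hb0, hd0,
      cubic_sign_of_three_roots hab hbd ha0 hb0 hd0⟩
  · obtain ⟨r, hr, hr0⟩ := exists_cubic_root_two_lt (by linarith : 2 < 6 * q - 3)
    exact ⟨r, by linarith, hr0, cubic_root_unique_of_four_lt_sq hr0 (by nlinarith)⟩
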